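/- Fix n ≥ 4, ρ ∈ [0,1] and d_n > 0. Then for every function f : Ω_n → ℝ: √n ∫ (η(1) − η(2)) f(η) dν_ρ(η) − n² (d_n/2) ∫ (f(η^{1↔2}) − f(η))² dν_ρ(η) ≤ ρ/(2 d_n n). In particular, sup_f { √n ∫ (η(1) − η(2)) f dν_ρ − n² (d_n/2) ∫ (f∘(·)^{1↔2} − f)² dν_ρ } ≤ ρ/(2 d_n n), the supremum being over all f : Ω_n → ℝ. -/

import Mathlib

noncomputable section

open Finset

/-- `η^{1→n−1}`: remove the top card and insert it at position `n−1`.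
Positions are labelled by `ZMod n`, with position `n` corresponding to `0`
and position `n−1` to `-1`. -/
def mapA {n : ℕ} (η : ZMod n → Fin 2) : ZMod n → Fin 2 :=
  fun x => if x = 0 then η 0 else if x = -1 then η 1 else η (x + 1)

/-- `η^{1→n}`: remove the top card and insert it at the bottom,
i.e. `η^{1→n}(x) = η(x+1)` cyclically. -/
def mapB {n : ℕ} (η : ZMod n → Fin 2) : ZMod n → Fin 2 :=
  fun x => η (x + 1)

/-- `η^{n→1}`: remove the bottom card and insert it at the top,
i.e. `η^{n→1}(x) = η(x−1)` cyclically. -/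
def mapC {n : ℕ} (η : ZMod n → Fin 2) : ZMod n → Fin 2 :=
  fun x => η (x - 1)

/-- `η^{1↔2}`: transpose the coordinates at positions `1` and `2`. -/
def mapD {n : ℕ} (η : ZMod n → Fin 2) : ZMod n → Fin 2 :=
  fun x => if x = 1 then η 2 else if x = 2 then η 1 else η x

/-- The particle-system generator `𝓛ₙ`. -/
def gen {n : ℕ} (a b c d : ℝ) (f : (ZMod n → Fin 2) → ℝ) (η : ZMod n → Fin 2) : ℝ :=
  a * (f (mapA η) - f η) + b * (f (mapB η) - f η)
    + c * (f (mapC η) - f η) + d * (f (mapD η) - f η)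

/-- The Bernoulli product measure `ν_ρ` on `Ω_n = {0,1}^{ℤ_n}`. -/
def nuMeasure {n : ℕ} [NeZero n] (ρ : ℝ) (η : ZMod n → Fin 2) : ℝ :=
  ∏ x : ZMod n, (ρ * ((η x : ℕ) : ℝ) + (1 - ρ) * (1 - ((η x : ℕ) : ℝ)))

/-- `∫ F dν_ρ = ∑_η ν_ρ(η) F(η)`. -/
def integral {n : ℕ} [NeZero n] (ρ : ℝ) (F : (ZMod n → Fin 2) → ℝ) : ℝ :=
  ∑ η : ZMod n → Fin 2, nuMeasure ρ η * F η

/-! The swap `η ↦ η^{1↔2}` preserves `ν_ρ` and reverses the sign of the current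
`V(η) = η(1) − η(2)`, so `∫ V f dν_ρ = ½ ∫ V (f − f(·^{1↔2})) dν_ρ`. Pointwise, completing
the square in `δ = f − f(·^{1↔2})` gives `(√n/2) V δ − n² (d/2) δ² ≤ V²/(8 n d)`, and
`V² ≤ η(1) + η(2)` has `ν_ρ`-mean `2ρ`. -/

lemma cast_fin_two_sq (v : Fin 2) : ((v : ℕ) : ℝ) ^ 2 = (v : ℕ) := by
  fin_cases v <;> norm_num

lemma mul_sub_mul_sq_le_sq_div {β : ℝ} (hβ : 0 < β) (p x : ℝ) :
    p * x - β * x ^ 2 ≤ p ^ 2 / (4 * β) := by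
  rw [le_div_iff₀ (by positivity)]
  nlinarith [sq_nonneg (p - 2 * β * x)]

lemma sqrt_div_two_mul_sub_sq_le {m d : ℝ} (hm : 0 < m) (hd : 0 < d) (v x : ℝ) :
    √m / 2 * (v * x) - m ^ 2 * (d / 2) * x ^ 2 ≤ 1 / (8 * m * d) * v ^ 2 :=
  calc _ = √m / 2 * v * x - m ^ 2 * (d / 2) * x ^ 2 := by ring
    _ ≤ (√m / 2 * v) ^ 2 / (4 * (m ^ 2 * (d / 2))) :=
        mul_sub_mul_sq_le_sq_div (by positivity) _ _
    _ = 1 / (8 * m * d) * v ^ 2 := by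
        rw [mul_pow, div_pow, Real.sq_sqrt hm.le]
        field_simp
        ring

lemma mapD_eq_comp_swap {n : ℕ} (η : ZMod n → Fin 2) : mapD η = η ∘ Equiv.swap 1 2 := by
  funext x
  simp only [mapD, Function.comp_apply, Equiv.swap_apply_def]
  split_ifs <;> simp_all

section Integral

variable {n : ℕ} [NeZero n] {ρ : ℝ}

lemma nuMeasure_nonneg (hρ : ρ ∈ Set.Icc (0 : ℝ) 1) (η : ZMod n → Fin 2) :
    0 ≤ nuMeasure ρ η :=
  prod_nonneg fun x _ => by
    generalize η x = v
    fin_cases v <;> simp [hρ.1, hρ.2]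

lemma nuMeasure_comp_perm (σ : Equiv.Perm (ZMod n)) (η : ZMod n → Fin 2) :
    nuMeasure ρ (η ∘ σ) = nuMeasure ρ η :=
  Equiv.prod_comp σ fun x => ρ * ((η x : ℕ) : ℝ) + (1 - ρ) * (1 - ((η x : ℕ) : ℝ))

lemma integral_add (F G : (ZMod n → Fin 2) → ℝ) :
    integral ρ (fun η => F η + G η) = integral ρ F + integral ρ G := by
  simp only [integral, mul_add, sum_add_distrib]

lemma integral_sub (F G : (ZMod n → Fin 2) → ℝ) :
    integral ρ (fun η => F η - G η) = integral ρ F - integral ρ G := by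
  simp only [integral, mul_sub, sum_sub_distrib]

lemma integral_neg (F : (ZMod n → Fin 2) → ℝ) :
    integral ρ (fun η => -F η) = -integral ρ F := by
  simp only [integral, mul_neg, sum_neg_distrib]

lemma integral_const_mul (c : ℝ) (F : (ZMod n → Fin 2) → ℝ) :
    integral ρ (fun η => c * F η) = c * integral ρ F := by
  simp only [integral, mul_sum, mul_left_comm]

lemma integral_mono (hρ : ρ ∈ Set.Icc (0 : ℝ) 1) {F G : (ZMod n → Fin 2) → ℝ}
    (h : ∀ η, F η ≤ G η) : integral ρ F ≤ integral ρ G :=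
  sum_le_sum fun η _ => mul_le_mul_of_nonneg_left (h η) (nuMeasure_nonneg hρ η)

lemma integral_comp_perm (σ : Equiv.Perm (ZMod n)) (F : (ZMod n → Fin 2) → ℝ) :
    integral ρ (fun η => F (η ∘ σ)) = integral ρ F := by
  refine Fintype.sum_equiv (σ.symm.arrowCongr (Equiv.refl (Fin 2))) _ _ fun η => ?_
  change _ = nuMeasure ρ (η ∘ σ) * F (η ∘ σ)
  rw [nuMeasure_comp_perm]

lemma integral_comp_mapD (F : (ZMod n → Fin 2) → ℝ) :
    integral ρ (fun η => F (mapD η)) = integral ρ F := by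
  rw [← integral_comp_perm (Equiv.swap 1 2) F]
  congr 1
  funext η
  rw [mapD_eq_comp_swap]

lemma integral_coord (y : ZMod n) : integral ρ (fun η => ((η y : ℕ) : ℝ)) = ρ := by
  set w : ZMod n → Fin 2 → ℝ := fun x v =>
    (ρ * ((v : ℕ) : ℝ) + (1 - ρ) * (1 - ((v : ℕ) : ℝ))) * if x = y then ((v : ℕ) : ℝ) else 1
  have hw : ∀ x, ∑ v, w x v = if x = y then ρ else 1 := fun x => by
    by_cases hx : x = y <;> simp [w, hx, Fin.sum_univ_two]
  calc integral ρ (fun η => ((η y : ℕ) : ℝ)) = ∑ η : ZMod n → Fin 2, ∏ x, w x (η x) := by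
        refine sum_congr rfl fun η _ => ?_
        simp only [w, prod_mul_distrib, prod_ite_eq', mem_univ, if_true, nuMeasure]
    _ = ∏ x, ∑ v, w x v := (Fintype.prod_sum w).symm
    _ = ρ := by simp [hw]

lemma integral_sq_coord_sub_le (hρ : ρ ∈ Set.Icc (0 : ℝ) 1) (y z : ZMod n) :
    integral ρ (fun η => (((η y : ℕ) : ℝ) - ((η z : ℕ) : ℝ)) ^ 2) ≤ 2 * ρ :=
  calc _ ≤ integral ρ (fun η => ((η y : ℕ) : ℝ) + ((η z : ℕ) : ℝ)) :=
        integral_mono hρ fun η => by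
          nlinarith [cast_fin_two_sq (η y), cast_fin_two_sq (η z),
            mul_nonneg (Nat.cast_nonneg (α := ℝ) (η y : ℕ)) (Nat.cast_nonneg (α := ℝ) (η z : ℕ))]
    _ = 2 * ρ := by rw [integral_add, integral_coord, integral_coord]; ring

lemma integral_mul_eq_half_integral_mul_sub {T : (ZMod n → Fin 2) → ZMod n → Fin 2}
    (hT : ∀ F, integral ρ (fun η => F (T η)) = integral ρ F)
    {V : (ZMod n → Fin 2) → ℝ} (hV : ∀ η, V (T η) = -V η) (f : (ZMod n → Fin 2) → ℝ) :
    integral ρ (fun η => V η * f η) = integral ρ (fun η => V η * (f η - f (T η))) / 2 := by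
  have h := hT fun η => V η * f η
  simp only [hV, neg_mul, integral_neg] at h
  simp only [mul_sub, integral_sub]
  linarith

end Integral

theorem variational_bound_transposition_general {n : ℕ} [NeZero n]
    (ρ : ℝ) (hρ : ρ ∈ Set.Icc (0 : ℝ) 1) (d : ℝ) (hd : 0 < d) :
    (∀ f : (ZMod n → Fin 2) → ℝ,
      Real.sqrt n * integral ρ (fun η => (((η 1 : ℕ) : ℝ) - ((η 2 : ℕ) : ℝ)) * f η)
          - (n : ℝ) ^ 2 * (d / 2) * integral ρ (fun η => (f (mapD η) - f η) ^ 2)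
        ≤ ρ / (2 * d * n))
    ∧ (⨆ f : (ZMod n → Fin 2) → ℝ,
        (Real.sqrt n * integral ρ (fun η => (((η 1 : ℕ) : ℝ) - ((η 2 : ℕ) : ℝ)) * f η)
          - (n : ℝ) ^ 2 * (d / 2) * integral ρ (fun η => (f (mapD η) - f η) ^ 2)))
        ≤ ρ / (2 * d * n) := by
  refine ⟨?bound, ciSup_le ?bound⟩
  intro f
  have hn : (0 : ℝ) < n := Nat.cast_pos.mpr (NeZero.pos n)
  set V : (ZMod n → Fin 2) → ℝ := fun η => ((η 1 : ℕ) : ℝ) - ((η 2 : ℕ) : ℝ)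
  have hV : ∀ η, V (mapD η) = -V η := fun η => by simp [V, mapD_eq_comp_swap]
  calc _ = integral ρ (fun η => √n / 2 * (V η * (f η - f (mapD η)))
          - n ^ 2 * (d / 2) * (f (mapD η) - f η) ^ 2) := by
        rw [integral_sub, integral_const_mul, integral_const_mul,
          integral_mul_eq_half_integral_mul_sub integral_comp_mapD hV]
        ring
    _ ≤ integral ρ (fun η => 1 / (8 * n * d) * V η ^ 2) :=
        integral_mono hρ fun η => by
          rw [← neg_sub (f η), neg_sq]
          exact sqrt_div_two_mul_sub_sq_le hn hd _ _
    _ ≤ 1 / (8 * n * d) * (2 * ρ) := by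
        rw [integral_const_mul]
        gcongr
        exact integral_sq_coord_sub_le hρ 1 2
    _ ≤ ρ / (2 * d * n) := by
        field_simp
        nlinarith [hρ.1]

theorem variational_bound_transposition {n : ℕ} [NeZero n] (hn : 4 ≤ n)
    (ρ : ℝ) (hρ : ρ ∈ Set.Icc (0 : ℝ) 1) (d : ℝ) (hd : 0 < d) :
    (∀ f : (ZMod n → Fin 2) → ℝ,
      Real.sqrt n * integral ρ (fun η => (((η 1 : ℕ) : ℝ) - ((η 2 : ℕ) : ℝ)) * f η)
          - (n : ℝ) ^ 2 * (d / 2) * integral ρ (fun η => (f (mapD η) - f η) ^ 2)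
        ≤ ρ / (2 * d * n))
    ∧ (⨆ f : (ZMod n → Fin 2) → ℝ,
        (Real.sqrt n * integral ρ (fun η => (((η 1 : ℕ) : ℝ) - ((η 2 : ℕ) : ℝ)) * f η)
          - (n : ℝ) ^ 2 * (d / 2) * integral ρ (fun η => (f (mapD η) - f η) ^ 2)))
        ≤ ρ / (2 * d * n) :=
  variational_bound_transposition_general ρ hρ d hd
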